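/- Let n < m, n ≥ 2. The cusp model C : ℝⁿ → ℝᵐ defined by C(y,z) = (y, z³ − 3y₁z, ∫₀ᶻ (s² − y₁)² ds, 0, …, 0), where y = (y₁,…,y_{n−1}), is injective on all of ℝⁿ, and its derivative at a point (y,z) is an injective linear map ℝⁿ → ℝᵐ if and only if z² ≠ y₁. -/

import Mathlib

/-!
The first factor of `C` is the identity on `y`, so `C` is injective as soon as, for fixed `y₁`,
`z ↦ ∫₀ᶻ (s² − y₁)² ds` is; and it is strictly increasing, its integrand being continuous,
nonnegative and zero at no more than two points. Likewise, the derivative of a map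
`(u, t) ↦ (u, Φ (u, t))` is injective exactly when `∂ₜΦ ≠ 0`, and here
`∂_z Φ = (3(z² − y₁), (z² − y₁)², 0)`.
-/

/-- The cusp (threefold-corner) model `C : ℝⁿ → ℝᵐ`,
`C(y,z) = (y, z³ − 3y₁z, ∫₀ᶻ (s² − y₁)² ds, 0, …, 0)`, where
`y = (y₁, y') ∈ ℝ × ℝ^{n−2}` (so `k = n−2`) and the trailing zeros are
collected in a Euclidean factor (so `l = m − n − 1`). -/
noncomputable def Cmap (k l : ℕ) (p : (ℝ × EuclideanSpace ℝ (Fin k)) × ℝ) :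
    (ℝ × EuclideanSpace ℝ (Fin k)) × ℝ × ℝ × EuclideanSpace ℝ (Fin l) :=
  (p.1, p.2^3 - 3*p.1.1*p.2, ∫ s in (0:ℝ)..p.2, (s^2 - p.1.1)^2, 0)

open intervalIntegral

section GraphMap

variable {𝕜 E F : Type*} [NontriviallyNormedField 𝕜] [NormedAddCommGroup E] [NormedSpace 𝕜 E]
  [NormedAddCommGroup F] [NormedSpace 𝕜 F]

theorem ContinuousLinearMap.injective_fst_prod_iff (L : E × 𝕜 →L[𝕜] F) :
    Function.Injective ((ContinuousLinearMap.fst 𝕜 E 𝕜).prod L) ↔ L (0, 1) ≠ 0 := by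
  constructor
  · intro hinj hL
    have : ((ContinuousLinearMap.fst 𝕜 E 𝕜).prod L) (0, 1) =
        ((ContinuousLinearMap.fst 𝕜 E 𝕜).prod L) 0 := by
      simp [hL]
    simpa using hinj this
  · intro hL v w hvw
    have hfst : v.1 = w.1 := by simpa using congrArg Prod.fst hvw
    have hsub : v - w = (v.2 - w.2) • ((0 : E), (1 : 𝕜)) := by ext <;> simp [hfst]
    have hsmul : (v.2 - w.2) • L (0, 1) = 0 := by
      rw [← map_smul, ← hsub, map_sub, sub_eq_zero]
      simpa using congrArg Prod.snd hvw
    exact Prod.ext hfst (sub_eq_zero.mp ((smul_eq_zero.mp hsmul).resolve_right hL))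

theorem injective_fderiv_fst_prodMk_iff {Φ : E × 𝕜 → F} {p : E × 𝕜} {w : F}
    (hΦ : DifferentiableAt 𝕜 Φ p) (hw : HasDerivAt (fun t => Φ (p.1, t)) w p.2) :
    Function.Injective (fderiv 𝕜 (fun q => (q.1, Φ q)) p) ↔ w ≠ 0 := by
  have hcurve : HasDerivAt (fun t : 𝕜 => (p.1, t)) ((0 : E), (1 : 𝕜)) p.2 :=
    (hasDerivAt_const _ _).prodMk (hasDerivAt_id _)
  have hpartial : fderiv 𝕜 Φ p (0, 1) = w :=
    (hΦ.hasFDerivAt.comp_hasDerivAt p.2 hcurve).unique hw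
  rw [(hasFDerivAt_fst.prodMk hΦ.hasFDerivAt).fderiv, ← hpartial]
  exact ContinuousLinearMap.injective_fst_prod_iff _

end GraphMap

theorem integral_sq_sub_sq (c z : ℝ) :
    ∫ s in (0:ℝ)..z, (s ^ 2 - c) ^ 2 = z ^ 5 / 5 - 2 / 3 * c * z ^ 3 + c ^ 2 * z := by
  have hexpand : ∀ s : ℝ, (s ^ 2 - c) ^ 2 = s ^ 4 - 2 * c * s ^ 2 + c ^ 2 := fun s => by ring
  simp only [hexpand]
  rw [integral_add, integral_sub, integral_const_mul, integral_pow, integral_pow, integral_const]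
  · rw [smul_eq_mul]; ring
  all_goals apply Continuous.intervalIntegrable; fun_prop

theorem exists_mem_Icc_sq_ne {a b : ℝ} (hab : a < b) (c : ℝ) : ∃ s ∈ Set.Icc a b, s ^ 2 ≠ c := by
  by_cases ha : a ^ 2 = c
  · by_cases hb : b ^ 2 = c
    · have hba : b = -a := by
        have : (b - a) * (b + a) = 0 := by linear_combination hb - ha
        linarith [(mul_eq_zero.mp this).resolve_left (sub_pos.mpr hab).ne']
      refine ⟨0, ⟨by linarith, by linarith⟩, fun h0 => ?_⟩
      nlinarith
    · exact ⟨b, ⟨hab.le, le_rfl⟩, hb⟩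
  · exact ⟨a, ⟨le_rfl, hab.le⟩, ha⟩

theorem strictMono_integral_sq_sub_sq (c : ℝ) :
    StrictMono fun z => ∫ s in (0:ℝ)..z, (s ^ 2 - c) ^ 2 := by
  have hcont : Continuous fun s : ℝ => (s ^ 2 - c) ^ 2 := by fun_prop
  intro a b hab
  rw [← sub_pos, integral_interval_sub_left (hcont.intervalIntegrable _ _)
    (hcont.intervalIntegrable _ _)]
  obtain ⟨s, hs, hsc⟩ := exists_mem_Icc_sq_ne hab c
  exact integral_pos hab hcont.continuousOn (fun _ _ => sq_nonneg _)
    ⟨s, hs, pow_two_pos_of_ne_zero (sub_ne_zero.mpr hsc)⟩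

theorem Cmap_injective (k l : ℕ) : Function.Injective (Cmap k l) := by
  intro p q hpq
  simp only [Cmap, Prod.mk.injEq] at hpq
  obtain ⟨hy, -, hint, -⟩ := hpq
  rw [hy] at hint
  exact Prod.ext hy ((strictMono_integral_sq_sub_sq q.1.1).injective hint)

theorem injective_fderiv_Cmap_iff (k l : ℕ) (p : (ℝ × EuclideanSpace ℝ (Fin k)) × ℝ) :
    Function.Injective (fderiv ℝ (Cmap k l) p) ↔ p.2 ^ 2 ≠ p.1.1 := by
  have hdiff : DifferentiableAt ℝ (fun q : (ℝ × EuclideanSpace ℝ (Fin k)) × ℝ =>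
      (q.2 ^ 3 - 3 * q.1.1 * q.2, ∫ s in (0:ℝ)..q.2, (s ^ 2 - q.1.1) ^ 2,
        (0 : EuclideanSpace ℝ (Fin l)))) p := by
    simp only [integral_sq_sub_sq]
    fun_prop
  have hpartial : HasDerivAt (fun t => (t ^ 3 - 3 * p.1.1 * t,
      ∫ s in (0:ℝ)..t, (s ^ 2 - p.1.1) ^ 2, (0 : EuclideanSpace ℝ (Fin l))))
      (3 * (p.2 ^ 2 - p.1.1), (p.2 ^ 2 - p.1.1) ^ 2, 0) p.2 := by
    refine HasDerivAt.prodMk ?_ (HasDerivAt.prodMk ?_ (hasDerivAt_const _ _))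
    · refine ((hasDerivAt_pow 3 p.2).sub
        ((hasDerivAt_id p.2).const_mul (3 * p.1.1))).congr_deriv ?_
      push_cast
      ring
    · exact ((show Continuous fun s : ℝ => (s ^ 2 - p.1.1) ^ 2 by fun_prop)
        |>.integral_hasStrictDerivAt 0 p.2).hasDerivAt
  unfold Cmap
  rw [injective_fderiv_fst_prodMk_iff hdiff hpartial]
  simp [sub_eq_zero]

theorem Cmap_injective_and_fderiv_injective_iff (n m : ℕ) :
    Function.Injective (Cmap (n - 2) (m - n - 1)) ∧
    ∀ p : (ℝ × EuclideanSpace ℝ (Fin (n - 2))) × ℝ,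
      (Function.Injective ⇑(fderiv ℝ (Cmap (n - 2) (m - n - 1)) p) ↔
        p.2^2 ≠ p.1.1) :=
  ⟨Cmap_injective _ _, injective_fderiv_Cmap_iff _ _⟩
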